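/- Let A be a ring with a direct-sum ℤ-grading and let ∂: A → A be a derivation (additive and satisfying the Leibniz rule) with ∂(A_j) ⊆ A_j for every j ∈ ℤ. Let g ∈ A be invertible with Gauss pair (L,U), let Λ ∈ A₁, and suppose ∂g = Λ·g. Set B := π_{≥0}(L Λ L⁻¹). Then the Sato–Wilson equations hold: ∂U = B·U and ∂L = B·L − L·Λ; equivalently, ∂L·L⁻¹ = −π_{<0}(L Λ L⁻¹). -/
import Mathlib

/-- The negative-degree part `A_{<0} = ⊕_{j<0} A_j` of a ℤ-graded ring. -/
def negPart {R : Type*} [Ring R] (𝒜 : ℤ → AddSubgroup R) : AddSubgroup R :=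
  ⨆ j : {j : ℤ // j < 0}, 𝒜 j.1

/-- The nonnegative-degree part `A_{≥0} = ⊕_{j≥0} A_j` of a ℤ-graded ring. -/
def nonnegPart {R : Type*} [Ring R] (𝒜 : ℤ → AddSubgroup R) : AddSubgroup R :=
  ⨆ j : {j : ℤ // 0 ≤ j}, 𝒜 j.1

/-- The projection `π_{≥0}` onto the sum of the homogeneous components of
nonnegative degree. -/
noncomputable def projGE {R : Type*} [Ring R] (𝒜 : ℤ → AddSubgroup R) [GradedRing 𝒜]
    (x : R) : R :=
  DirectSum.toAddMonoid (fun j => if 0 ≤ j then (𝒜 j).subtype else 0)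
    (DirectSum.decompose 𝒜 x)

/-- The projection `π_{<0}` onto the sum of the homogeneous components of
negative degree. -/
noncomputable def projLT {R : Type*} [Ring R] (𝒜 : ℤ → AddSubgroup R) [GradedRing 𝒜]
    (x : R) : R :=
  DirectSum.toAddMonoid (fun j => if j < 0 then (𝒜 j).subtype else 0)
    (DirectSum.decompose 𝒜 x)

/-- A Gauss pair `(L, U)` for an (invertible) element `g` of a ℤ-graded ring:
`L` and `L⁻¹` lie in `1 + A_{<0}`, `U` and `U⁻¹` lie in `A_{≥0}`, and `g = L⁻¹ * U`. -/
def IsGaussPair {R : Type*} [Ring R] (𝒜 : ℤ → AddSubgroup R) (g : R) (L U : Rˣ) : Prop :=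
  ((L : R) - 1) ∈ negPart 𝒜 ∧ (((L⁻¹ : Rˣ) : R) - 1) ∈ negPart 𝒜 ∧
    (U : R) ∈ nonnegPart 𝒜 ∧ ((U⁻¹ : Rˣ) : R) ∈ nonnegPart 𝒜 ∧
    g = ((L⁻¹ : Rˣ) : R) * (U : R)

section Aux
variable {R : Type*} [Ring R] (𝒜 : ℤ → AddSubgroup R)

lemma mem_negPart_of {j : ℤ} (hj : j < 0) {x : R} (hx : x ∈ 𝒜 j) : x ∈ negPart 𝒜 :=
  (le_iSup (fun j : {j : ℤ // j < 0} => 𝒜 j.1) ⟨j, hj⟩) hx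

lemma mem_nonnegPart_of {j : ℤ} (hj : 0 ≤ j) {x : R} (hx : x ∈ 𝒜 j) : x ∈ nonnegPart 𝒜 :=
  (le_iSup (fun j : {j : ℤ // 0 ≤ j} => 𝒜 j.1) ⟨j, hj⟩) hx

lemma negPart_induction {p : R → Prop} {x : R} (hx : x ∈ negPart 𝒜)
    (hmem : ∀ j < (0:ℤ), ∀ y ∈ 𝒜 j, p y) (h0 : p 0)
    (hadd : ∀ a b, p a → p b → p (a + b)) : p x :=
  AddSubgroup.iSup_induction (C := p) _ hx (fun i y hy => hmem i.1 i.2 y hy) h0 hadd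

lemma nonnegPart_induction {p : R → Prop} {x : R} (hx : x ∈ nonnegPart 𝒜)
    (hmem : ∀ j : ℤ, 0 ≤ j → ∀ y ∈ 𝒜 j, p y) (h0 : p 0)
    (hadd : ∀ a b, p a → p b → p (a + b)) : p x :=
  AddSubgroup.iSup_induction (C := p) _ hx (fun i y hy => hmem i.1 i.2 y hy) h0 hadd

variable [GradedRing 𝒜]

lemma negPart_mul {a b : R} (ha : a ∈ negPart 𝒜) (hb : b ∈ negPart 𝒜) :
    a * b ∈ negPart 𝒜 := by
  refine negPart_induction 𝒜 (p := fun y => y * b ∈ negPart 𝒜) ha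
    (fun j hj y hy => ?_)
    (by show (0:R) * b ∈ negPart 𝒜; rw [zero_mul]; exact zero_mem _)
    (fun x y hx hy => by show (x + y) * b ∈ negPart 𝒜; rw [add_mul]; exact add_mem hx hy)
  refine negPart_induction 𝒜 (p := fun z => y * z ∈ negPart 𝒜) hb
    (fun k hk z hz => mem_negPart_of 𝒜 (by omega) (SetLike.mul_mem_graded hy hz))
    (by show y * (0:R) ∈ negPart 𝒜; rw [mul_zero]; exact zero_mem _)
    (fun x' y' hx' hy' => by show y * (x' + y') ∈ negPart 𝒜; rw [mul_add]; exact add_mem hx' hy')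

lemma nonnegPart_mul {a b : R} (ha : a ∈ nonnegPart 𝒜) (hb : b ∈ nonnegPart 𝒜) :
    a * b ∈ nonnegPart 𝒜 := by
  refine nonnegPart_induction 𝒜 (p := fun y => y * b ∈ nonnegPart 𝒜) ha
    (fun j hj y hy => ?_)
    (by show (0:R) * b ∈ nonnegPart 𝒜; rw [zero_mul]; exact zero_mem _)
    (fun x y hx hy => by show (x + y) * b ∈ nonnegPart 𝒜; rw [add_mul]; exact add_mem hx hy)
  refine nonnegPart_induction 𝒜 (p := fun z => y * z ∈ nonnegPart 𝒜) hb
    (fun k hk z hz => mem_nonnegPart_of 𝒜 (by omega) (SetLike.mul_mem_graded hy hz))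
    (by show y * (0:R) ∈ nonnegPart 𝒜; rw [mul_zero]; exact zero_mem _)
    (fun x' y' hx' hy' => by
      show y * (x' + y') ∈ nonnegPart 𝒜; rw [mul_add]; exact add_mem hx' hy')

lemma projGE_add (x y : R) : projGE 𝒜 (x + y) = projGE 𝒜 x + projGE 𝒜 y := by
  unfold projGE; rw [DirectSum.decompose_add, map_add]

lemma projLT_add (x y : R) : projLT 𝒜 (x + y) = projLT 𝒜 x + projLT 𝒜 y := by
  unfold projLT; rw [DirectSum.decompose_add, map_add]

lemma projGE_zero : projGE 𝒜 (0:R) = 0 := by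
  unfold projGE; rw [DirectSum.decompose_zero, map_zero]

lemma projLT_zero : projLT 𝒜 (0:R) = 0 := by
  unfold projLT; rw [DirectSum.decompose_zero, map_zero]

lemma projGE_homog {j : ℤ} {x : R} (hx : x ∈ 𝒜 j) :
    projGE 𝒜 x = if 0 ≤ j then x else 0 := by
  unfold projGE
  rw [show x = ((⟨x, hx⟩ : 𝒜 j) : R) from rfl, DirectSum.decompose_coe,
    DirectSum.toAddMonoid_of]
  split <;> simp

lemma projLT_homog {j : ℤ} {x : R} (hx : x ∈ 𝒜 j) :
    projLT 𝒜 x = if j < 0 then x else 0 := by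
  unfold projLT
  rw [show x = ((⟨x, hx⟩ : 𝒜 j) : R) from rfl, DirectSum.decompose_coe,
    DirectSum.toAddMonoid_of]
  split <;> simp

lemma projGE_of_nonneg {x : R} (hx : x ∈ nonnegPart 𝒜) : projGE 𝒜 x = x := by
  refine nonnegPart_induction 𝒜 (p := fun y => projGE 𝒜 y = y) hx
    (fun j hj y hy => by show projGE 𝒜 y = _; rw [projGE_homog 𝒜 hy, if_pos hj])
    (projGE_zero 𝒜)
    (fun a b ha hb => by show projGE 𝒜 (a + b) = a + b; rw [projGE_add, ha, hb])

lemma projGE_of_neg {x : R} (hx : x ∈ negPart 𝒜) : projGE 𝒜 x = 0 := by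
  refine negPart_induction 𝒜 (p := fun y => projGE 𝒜 y = 0) hx
    (fun j hj y hy => by show projGE 𝒜 y = _; rw [projGE_homog 𝒜 hy, if_neg (by omega)])
    (projGE_zero 𝒜)
    (fun a b ha hb => by show projGE 𝒜 (a + b) = 0; rw [projGE_add, ha, hb, add_zero])

lemma projLT_of_nonneg {x : R} (hx : x ∈ nonnegPart 𝒜) : projLT 𝒜 x = 0 := by
  refine nonnegPart_induction 𝒜 (p := fun y => projLT 𝒜 y = 0) hx
    (fun j hj y hy => by show projLT 𝒜 y = _; rw [projLT_homog 𝒜 hy, if_neg (by omega)])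
    (projLT_zero 𝒜)
    (fun a b ha hb => by show projLT 𝒜 (a + b) = 0; rw [projLT_add, ha, hb, add_zero])

lemma projLT_of_neg {x : R} (hx : x ∈ negPart 𝒜) : projLT 𝒜 x = x := by
  refine negPart_induction 𝒜 (p := fun y => projLT 𝒜 y = y) hx
    (fun j hj y hy => by show projLT 𝒜 y = _; rw [projLT_homog 𝒜 hy, if_pos hj])
    (projLT_zero 𝒜)
    (fun a b ha hb => by show projLT 𝒜 (a + b) = a + b; rw [projLT_add, ha, hb])

end Aux


/-- The Sato–Wilson equations: if `∂` is a degree-preserving derivation,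
`(L, U)` is a Gauss pair for `g`, `Λ ∈ A₁` and `∂g = Λ·g`, then with
`B := π_{≥0}(L Λ L⁻¹)` one has `∂U = B·U` and `∂L = B·L − L·Λ`; equivalently,
`∂L·L⁻¹ = −π_{<0}(L Λ L⁻¹)`. -/
theorem sato_wilson_equations {R : Type*} [Ring R]
    (𝒜 : ℤ → AddSubgroup R) [GradedRing 𝒜]
    (D : R → R)
    (hD_add : ∀ x y : R, D (x + y) = D x + D y)
    (hD_mul : ∀ x y : R, D (x * y) = D x * y + x * D y)
    (hD_grade : ∀ (j : ℤ), ∀ x ∈ 𝒜 j, D x ∈ 𝒜 j)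
    (g : R) (L U : Rˣ) (hLU : IsGaussPair 𝒜 g L U)
    (Λ : R) (hΛ : Λ ∈ 𝒜 1)
    (hDg : D g = Λ * g) :
    D (U : R) = projGE 𝒜 ((L : R) * Λ * ((L⁻¹ : Rˣ) : R)) * (U : R) ∧
    D (L : R) = projGE 𝒜 ((L : R) * Λ * ((L⁻¹ : Rˣ) : R)) * (L : R) - (L : R) * Λ ∧
    D (L : R) * ((L⁻¹ : Rˣ) : R) = -projLT 𝒜 ((L : R) * Λ * ((L⁻¹ : Rˣ) : R)) := by
  obtain ⟨hL, hLi, hU, hUi, hg⟩ := hLU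
  have hD0 : D 0 = 0 := by
    have h := hD_add 0 0
    simpa using h.symm
  have hD1 : D 1 = 0 := by
    have h := hD_mul 1 1
    simpa using h.symm
  have hDneg : ∀ x : R, D (-x) = -D x := fun x => by
    have h : D x + D (-x) = 0 := by rw [← hD_add, add_neg_cancel, hD0]
    exact eq_neg_of_add_eq_zero_right h
  have hDsub : ∀ x y : R, D (x - y) = D x - D y := fun x y => by
    rw [sub_eq_add_neg, hD_add, hDneg, ← sub_eq_add_neg]
  -- D preserves the parts
  have hDnegP : ∀ x ∈ negPart 𝒜, D x ∈ negPart 𝒜 := fun x hx =>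
    negPart_induction 𝒜 (p := fun y => D y ∈ negPart 𝒜) hx
      (fun j hj y hy => mem_negPart_of 𝒜 hj (hD_grade j y hy))
      (by show D 0 ∈ negPart 𝒜; rw [hD0]; exact zero_mem _)
      (fun a b ha hb => by show D (a + b) ∈ negPart 𝒜; rw [hD_add]; exact add_mem ha hb)
  have hDnonnegP : ∀ x ∈ nonnegPart 𝒜, D x ∈ nonnegPart 𝒜 := fun x hx =>
    nonnegPart_induction 𝒜 (p := fun y => D y ∈ nonnegPart 𝒜) hx
      (fun j hj y hy => mem_nonnegPart_of 𝒜 hj (hD_grade j y hy))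
      (by show D 0 ∈ nonnegPart 𝒜; rw [hD0]; exact zero_mem _)
      (fun a b ha hb => by show D (a + b) ∈ nonnegPart 𝒜; rw [hD_add]; exact add_mem ha hb)
  have hDL_neg : D (L : R) ∈ negPart 𝒜 := by
    have h : D ((L : R) - 1) = D (L : R) := by rw [hDsub, hD1, sub_zero]
    rw [← h]; exact hDnegP _ hL
  have hl : D (L : R) * ((L⁻¹ : Rˣ) : R) ∈ negPart 𝒜 := by
    have h : D (L : R) * ((L⁻¹ : Rˣ) : R)
        = D (L : R) * (((L⁻¹ : Rˣ) : R) - 1) + D (L : R) := by noncomm_ring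
    rw [h]
    exact add_mem (negPart_mul 𝒜 hDL_neg hLi) hDL_neg
  have hu : D (U : R) * ((U⁻¹ : Rˣ) : R) ∈ nonnegPart 𝒜 :=
    nonnegPart_mul 𝒜 (hDnonnegP _ hU) hUi
  -- key identity
  have e1 : D ((L⁻¹ : Rˣ) : R) * (U : R) + ((L⁻¹ : Rˣ) : R) * D (U : R)
      = Λ * (((L⁻¹ : Rˣ) : R) * (U : R)) := by
    rw [← hD_mul, ← hg, hDg, hg]
  have e2 : D (L : R) * ((L⁻¹ : Rˣ) : R) + (L : R) * D ((L⁻¹ : Rˣ) : R) = 0 := by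
    rw [← hD_mul, Units.mul_inv, hD1]
  have h3 : (L : R) * D ((L⁻¹ : Rˣ) : R) = -(D (L : R) * ((L⁻¹ : Rˣ) : R)) :=
    eq_neg_of_add_eq_zero_right e2
  have key : (L : R) * Λ * ((L⁻¹ : Rˣ) : R)
      = D (U : R) * ((U⁻¹ : Rˣ) : R) - D (L : R) * ((L⁻¹ : Rˣ) : R) := by
    calc (L : R) * Λ * ((L⁻¹ : Rˣ) : R)
        = (L : R) * (Λ * (((L⁻¹ : Rˣ) : R) * (U : R))) * ((U⁻¹ : Rˣ) : R) := by
          simp only [mul_assoc, Units.mul_inv, mul_one]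
      _ = (L : R) * (D ((L⁻¹ : Rˣ) : R) * (U : R) + ((L⁻¹ : Rˣ) : R) * D (U : R))
            * ((U⁻¹ : Rˣ) : R) := by rw [← e1]
      _ = (L : R) * D ((L⁻¹ : Rˣ) : R) * ((U : R) * ((U⁻¹ : Rˣ) : R))
            + ((L : R) * ((L⁻¹ : Rˣ) : R)) * (D (U : R) * ((U⁻¹ : Rˣ) : R)) := by
          noncomm_ring
      _ = D (U : R) * ((U⁻¹ : Rˣ) : R) - D (L : R) * ((L⁻¹ : Rˣ) : R) := by
          rw [Units.mul_inv, Units.mul_inv, mul_one, one_mul, h3]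
          abel
  have hu_eq : D (U : R) * ((U⁻¹ : Rˣ) : R)
      = (L : R) * Λ * ((L⁻¹ : Rˣ) : R) + D (L : R) * ((L⁻¹ : Rˣ) : R) :=
    sub_eq_iff_eq_add.mp key.symm
  have hGE : projGE 𝒜 ((L : R) * Λ * ((L⁻¹ : Rˣ) : R)) = D (U : R) * ((U⁻¹ : Rˣ) : R) := by
    rw [key, sub_eq_add_neg, projGE_add, projGE_of_nonneg 𝒜 hu,
      projGE_of_neg 𝒜 (neg_mem hl), add_zero]
  have hLT : projLT 𝒜 ((L : R) * Λ * ((L⁻¹ : Rˣ) : R)) = -(D (L : R) * ((L⁻¹ : Rˣ) : R)) := by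
    rw [key, sub_eq_add_neg, projLT_add, projLT_of_nonneg 𝒜 hu,
      projLT_of_neg 𝒜 (neg_mem hl), zero_add]
  refine ⟨?_, ?_, ?_⟩
  · rw [hGE, mul_assoc, Units.inv_mul, mul_one]
  · rw [hGE, hu_eq, add_mul, mul_assoc ((L : R) * Λ) (((L⁻¹ : Rˣ) : R)) ((L : R)),
      mul_assoc (D (L : R)) (((L⁻¹ : Rˣ) : R)) ((L : R)), Units.inv_mul, mul_one, mul_one]
    abel
  · rw [hLT, neg_neg]
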